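/- In a game of Toggle starting from the position P_{1,0}(m,2) on the generalized Petersen graph P(m,2) (m ≥ 5), every vertex v that is unplayable at some reachable position is terminally unplayable at that position. -/

import Mathlib

namespace Toggle

variable {V : Type*} [Fintype V] [DecidableEq V]

/-- The closed neighborhood `N[v]` of a vertex as a `Finset`. -/
def closedNbhd (G : SimpleGraph V) [DecidableRel G.Adj] (v : V) : Finset V :=
  insert v (G.neighborFinset v)

/-- The result of a Toggle move at `v`: flip the weight of every vertex in `N[v]`. -/
def move (G : SimpleGraph V) [DecidableRel G.Adj] (ω : V → Bool) (v : V) : V → Bool :=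
  fun u => if u ∈ closedNbhd G v then !(ω u) else ω u

/-- Total weight of a position. -/
def weight (ω : V → Bool) : ℕ := (Finset.univ.filter (fun u => ω u = true)).card

/-- Weight of a position over the closed neighborhood of `v`. -/
def nbhdWeight (G : SimpleGraph V) [DecidableRel G.Adj] (ω : V → Bool) (v : V) : ℕ :=
  ((closedNbhd G v).filter (fun u => ω u = true)).card

/-- A Toggle move at `v` is legal iff `ω v = 1` and the move strictly decreases the
weight over `N[v]`. -/
def IsLegal (G : SimpleGraph V) [DecidableRel G.Adj] (ω : V → Bool) (v : V) : Prop :=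
  ω v = true ∧ nbhdWeight G (move G ω v) v < nbhdWeight G ω v

instance (G : SimpleGraph V) [DecidableRel G.Adj] (ω : V → Bool) (v : V) :
    Decidable (IsLegal G ω v) :=
  inferInstanceAs (Decidable (ω v = true ∧ nbhdWeight G (move G ω v) v < nbhdWeight G ω v))

theorem weight_move_lt (G : SimpleGraph V) [DecidableRel G.Adj] {ω : V → Bool} {v : V}
    (h : IsLegal G ω v) : weight (move G ω v) < weight ω := by
  have key : ∀ ψ : V → Bool,
      weight ψ = ((closedNbhd G v).filter (fun u => ψ u = true)).card
        + ((Finset.univ \ closedNbhd G v).filter (fun u => ψ u = true)).card := by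
    intro ψ
    rw [weight, ← Finset.card_union_of_disjoint
      (Finset.disjoint_filter_filter Finset.disjoint_sdiff)]
    congr 1
    ext u
    simp only [Finset.mem_filter, Finset.mem_union, Finset.mem_sdiff, Finset.mem_univ,
      true_and]
    tauto
  have hout : ((Finset.univ \ closedNbhd G v).filter (fun u => move G ω v u = true))
      = ((Finset.univ \ closedNbhd G v).filter (fun u => ω u = true)) := by
    apply Finset.filter_congr
    intro u hu
    rw [Finset.mem_sdiff] at hu
    simp [move, hu.2]
  have h2 := h.2
  rw [key (move G ω v), key ω, hout]
  unfold nbhdWeight at h2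
  omega

/-- Minimal excludant of a finite set of naturals. -/
noncomputable def mex (s : Finset ℕ) : ℕ := sInf {n : ℕ | n ∉ s}

/-- The Nimber (Grundy value) of a Toggle position. -/
noncomputable def grundy (G : SimpleGraph V) [DecidableRel G.Adj] (ω : V → Bool) : ℕ :=
  mex ((Finset.univ.filter (fun v => IsLegal G ω v)).attach.image
    (fun v => grundy G (move G ω v.1)))
termination_by weight ω
decreasing_by
  have hv := v.2
  rw [Finset.mem_filter] at hv
  exact weight_move_lt G hv.2

/-- One legal Toggle move transforms `ω` into `ω'`. -/
def Step (G : SimpleGraph V) [DecidableRel G.Adj] (ω ω' : V → Bool) : Prop :=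
  ∃ v, IsLegal G ω v ∧ ω' = move G ω v

/-- `ω'` is reachable from `ω` by a (possibly empty) sequence of legal moves. -/
def Reach (G : SimpleGraph V) [DecidableRel G.Adj] (ω ω' : V → Bool) : Prop :=
  Relation.ReflTransGen (Step G) ω ω'

/-- `v` is terminally unplayable at `ω`: unplayable at `ω` and at every position
reachable from `ω`. -/
def TerminallyUnplayable (G : SimpleGraph V) [DecidableRel G.Adj] (ω : V → Bool) (v : V) :
    Prop :=
  ∀ ω', Reach G ω ω' → ¬ IsLegal G ω' v

/-- `v` is penultimately unplayable for the initial position `ω₀`: at every position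
reachable from `ω₀`, after any legal move at a vertex `u ∈ N[v]`, the vertex `v` is
terminally unplayable. -/
def PenultimatelyUnplayableAt (G : SimpleGraph V) [DecidableRel G.Adj] (ω₀ : V → Bool)
    (v : V) : Prop :=
  ∀ ω', Reach G ω₀ ω' → ∀ u ∈ closedNbhd G v, IsLegal G ω' u →
    TerminallyUnplayable G (move G ω' u) v

/-- The position `ω₀` is penultimately unplayable if every vertex is. -/
def PenultimatelyUnplayable (G : SimpleGraph V) [DecidableRel G.Adj] (ω₀ : V → Bool) :
    Prop :=
  ∀ v, PenultimatelyUnplayableAt G ω₀ v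

/-- The path graph on `Fin n`, vertices `0, 1, …, n-1` in order. -/
def pathGraph (n : ℕ) : SimpleGraph (Fin n) :=
  SimpleGraph.fromRel (fun a b => (a : ℕ) + 1 = (b : ℕ))

instance (n : ℕ) : DecidableRel (pathGraph n).Adj := fun a b =>
  decidable_of_iff _ (SimpleGraph.fromRel_adj _ a b).symm

/-- The 2×m grid graph `L_{2,m}` (0-indexed rows and columns). -/
def gridGraph (m : ℕ) : SimpleGraph (Fin 2 × Fin m) :=
  SimpleGraph.fromRel (fun a b =>
    (a.1 = b.1 ∧ (a.2 : ℕ) + 1 = (b.2 : ℕ)) ∨ (a.2 = b.2 ∧ (a.1 : ℕ) + 1 = (b.1 : ℕ)))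

instance (m : ℕ) : DecidableRel (gridGraph m).Adj := fun a b =>
  decidable_of_iff _ (SimpleGraph.fromRel_adj _ a b).symm

/-- The generalized Petersen graph `P(m,k)`; the vertex `(0, i)` is the outer vertex
`u_i` and `(1, i)` is the inner vertex `w_i` (0-indexed). -/
def petersen (m k : ℕ) : SimpleGraph (Fin 2 × Fin m) :=
  SimpleGraph.fromRel (fun a b =>
    (a.1 = 0 ∧ b.1 = 0 ∧ ((a.2 : ℕ) + 1) % m = (b.2 : ℕ)) ∨
    (a.1 = 0 ∧ b.1 = 1 ∧ a.2 = b.2) ∨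
    (a.1 = 1 ∧ b.1 = 1 ∧ ((a.2 : ℕ) + k) % m = (b.2 : ℕ)))

instance (m k : ℕ) : DecidableRel (petersen m k).Adj := fun a b =>
  decidable_of_iff _ (SimpleGraph.fromRel_adj _ a b).symm

/-- The position on `P(m,k)` where every outer vertex has weight 1 and every inner
vertex has weight 0. -/
def P01 (m : ℕ) : Fin 2 × Fin m → Bool := fun p => decide (p.1 = 0)

/-- The position on `P(m,k)` where every inner vertex has weight 1 and every outer
vertex has weight 0. -/
def P10 (m : ℕ) : Fin 2 × Fin m → Bool := fun p => decide (p.1 = 1)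

/-- The position where every vertex has weight 1. -/
def P11 (m : ℕ) : Fin 2 × Fin m → Bool := fun _ => true

/-- The Toggle position `H_m` on `L_{2,m}` (columns 0-indexed): for `m ≠ 3`, weight 0
exactly at `(0,0), (0,m-1), (1,0), (1,1), (1,m-2), (1,m-1)`; for `m = 3`, weight 0
exactly at `(0,0), (0,2), (1,0), (1,2)`. -/
def Hpos (m : ℕ) : Fin 2 × Fin m → Bool := fun p =>
  if m = 3 then !(decide ((p.2 : ℕ) = 0 ∨ (p.2 : ℕ) = 2))
  else !(decide ((p.1 = 0 ∧ ((p.2 : ℕ) = 0 ∨ (p.2 : ℕ) = m - 1)) ∨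
                 (p.1 = 1 ∧ ((p.2 : ℕ) ≤ 1 ∨ m - 2 ≤ (p.2 : ℕ)))))

/-- The Toggle position `D_m` on `L_{2,m}` (columns 0-indexed): weight 0 exactly at
`(0,0), (0,m-2), (0,m-1), (1,0), (1,1), (1,m-1)`. -/
def Dpos (m : ℕ) : Fin 2 × Fin m → Bool := fun p =>
  !(decide ((p.1 = 0 ∧ ((p.2 : ℕ) = 0 ∨ m - 2 ≤ (p.2 : ℕ))) ∨
            (p.1 = 1 ∧ ((p.2 : ℕ) ≤ 1 ∨ (p.2 : ℕ) = m - 1))))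

/-- The Nimber of the position `H_m`. -/
noncomputable def GH (m : ℕ) : ℕ := grundy (gridGraph m) (Hpos m)

/-- The Nimber of the position `D_m`. -/
noncomputable def GD (m : ℕ) : ℕ := grundy (gridGraph m) (Dpos m)

/-- The cycle graph `C_m` on `Fin m`. -/
def cycleGraph (m : ℕ) : SimpleGraph (Fin m) :=
  SimpleGraph.fromRel (fun a b => ((a : ℕ) + 1) % m = (b : ℕ))

open scoped Classical in
/-- The Nimber of a position of Jacob's Ladder on `C_m`: a position is the `Finset` of
not-yet-removed vertices, and a move at a remaining vertex `v` removes all remaining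
vertices at distance at most 2 from `v` in `C_m`. -/
noncomputable def jlGrundy (m : ℕ) (S : Finset (Fin m)) : ℕ :=
  mex (S.attach.image (fun v =>
    jlGrundy m (S.filter (fun u => 2 < (cycleGraph m).dist v.1 u))))
termination_by S.card
decreasing_by
  apply Finset.card_lt_card
  rw [Finset.ssubset_iff_of_subset (Finset.filter_subset _ _)]
  exact ⟨v.1, v.2, by simp [SimpleGraph.dist_self]⟩

end Toggle

/-! Starting from `P_{1,0}(m,2)` no outer vertex ever becomes playable, because an outer vertex
that is on has an inner neighbour off and at most one outer neighbour on. Hence every move is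
made at an inner vertex `w_i`; it is legal exactly when `w_{i-2}`, `w_i`, `w_{i+2}` are on (then
`u_i` is off), and it switches these three off. So inner vertices are never switched on again,
and a move at `w_i` that is illegal now, because one of those three is off, stays illegal. -/

namespace Toggle

section General

variable {V : Type*} [Fintype V] [DecidableEq V] (G : SimpleGraph V) [DecidableRel G.Adj]

theorem mem_closedNbhd {u v : V} : u ∈ closedNbhd G v ↔ u = v ∨ G.Adj v u := by
  rw [closedNbhd, Finset.mem_insert, SimpleGraph.mem_neighborFinset]

theorem nbhdWeight_move_add_nbhdWeight (ω : V → Bool) (v : V) :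
    nbhdWeight G (move G ω v) v + nbhdWeight G ω v = (closedNbhd G v).card := by
  have hflip : (closedNbhd G v).filter (fun u => move G ω v u = true)
      = (closedNbhd G v).filter (fun u => ¬ ω u = true) :=
    Finset.filter_congr fun u hu => by simp [move, hu]
  rw [nbhdWeight, nbhdWeight, hflip, add_comm, Finset.card_filter_add_card_filter_not]

theorem isLegal_iff_card_lt_two_mul (ω : V → Bool) (v : V) :
    IsLegal G ω v ↔ ω v = true ∧ (closedNbhd G v).card < 2 * nbhdWeight G ω v := by
  have := nbhdWeight_move_add_nbhdWeight G ω v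
  exact and_congr_right fun _ => by omega

variable {G}

theorem isLegal_iff_of_closedNbhd_eq_of_eq_false {ω : V → Bool} {v a b c : V}
    (hN : closedNbhd G v = {v, a, b, c}) (hva : v ≠ a) (hvb : v ≠ b) (hvc : v ≠ c)
    (hab : a ≠ b) (hac : a ≠ c) (hbc : b ≠ c) (ha : ω a = false) :
    IsLegal G ω v ↔ ω v = true ∧ ω b = true ∧ ω c = true := by
  have hcard : (closedNbhd G v).card = 4 := by
    rw [hN, Finset.card_insert_of_notMem (by simp [hva, hvb, hvc]),
      Finset.card_insert_of_notMem (by simp [hab, hac]),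
      Finset.card_insert_of_notMem (by simp [hbc]), Finset.card_singleton]
  have hweight :
      nbhdWeight G ω v = (ω v).toNat + (ω a).toNat + (ω b).toNat + (ω c).toNat := by
    rw [nbhdWeight, hN, Finset.card_filter, Finset.sum_insert (by simp [hva, hvb, hvc]),
      Finset.sum_insert (by simp [hab, hac]), Finset.sum_insert (by simp [hbc]),
      Finset.sum_singleton]
    cases ω v <;> cases ω a <;> cases ω b <;> cases ω c <;> rfl
  rw [isLegal_iff_card_lt_two_mul, hcard, hweight, ha]
  cases ω v <;> cases ω b <;> cases ω c <;> simp

end General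

section Petersen

open Fin.CommRing

variable {m : ℕ} [NeZero m]

theorem _root_.Fin.add_mod_eq_iff_eq_add_natCast (i j : Fin m) (k : ℕ) :
    ((i : ℕ) + k) % m = j ↔ j = i + k := by
  rw [Fin.ext_iff, Fin.val_add, Fin.val_natCast, Nat.add_mod_mod, eq_comm]

theorem _root_.Fin.natCast_ne_zero_of_pos_of_lt {n : ℕ} (h0 : 0 < n) (hn : n < m) :
    (n : Fin m) ≠ 0 := by
  rw [Ne, Fin.natCast_eq_zero]
  exact Nat.not_dvd_of_pos_of_lt h0 hn

theorem closedNbhd_petersen_outer (k : ℕ) (i : Fin m) :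
    closedNbhd (petersen m k) (0, i) = {(0, i), (1, i), (0, i + 1), (0, i - 1)} := by
  ext ⟨a, j⟩
  fin_cases a <;>
    simp [mem_closedNbhd, petersen, SimpleGraph.fromRel_adj,
      Fin.add_mod_eq_iff_eq_add_natCast, eq_sub_iff_add_eq] <;>
    tauto

theorem closedNbhd_petersen_inner (k : ℕ) (i : Fin m) :
    closedNbhd (petersen m k) (1, i) = {(1, i), (0, i), (1, i + k), (1, i - k)} := by
  ext ⟨a, j⟩
  fin_cases a <;>
    simp [mem_closedNbhd, petersen, SimpleGraph.fromRel_adj,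
      Fin.add_mod_eq_iff_eq_add_natCast, eq_sub_iff_add_eq]
  tauto

theorem move_petersen_inner_apply_outer (k : ℕ) (ω : Fin 2 × Fin m → Bool) (i j : Fin m) :
    move (petersen m k) ω (1, i) (0, j) = if j = i then !ω (0, j) else ω (0, j) := by
  simp [move, closedNbhd_petersen_inner]

theorem move_petersen_inner_apply_inner (k : ℕ) (ω : Fin 2 × Fin m → Bool) (i j : Fin m) :
    move (petersen m k) ω (1, i) (1, j) =
      if j = i ∨ j = i + k ∨ j = i - k then !ω (1, j) else ω (1, j) := by
  simp [move, closedNbhd_petersen_inner]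

theorem isLegal_petersen_outer_iff {k : ℕ} (hm : 3 ≤ m) {ω : Fin 2 × Fin m → Bool}
    {i : Fin m} (hw : ω (1, i) = false) :
    IsLegal (petersen m k) ω (0, i) ↔
      ω (0, i) = true ∧ ω (0, i + 1) = true ∧ ω (0, i - 1) = true := by
  have h1 : (1 : Fin m) ≠ 0 := by
    exact_mod_cast Fin.natCast_ne_zero_of_pos_of_lt one_pos (by omega)
  have h2 : (2 : Fin m) ≠ 0 := by
    exact_mod_cast Fin.natCast_ne_zero_of_pos_of_lt two_pos (by omega)
  exact isLegal_iff_of_closedNbhd_eq_of_eq_false (closedNbhd_petersen_outer k i) (by simp)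
    (fun h => h1 (by linear_combination -congrArg Prod.snd h))
    (fun h => h1 (by linear_combination congrArg Prod.snd h)) (by simp) (by simp)
    (fun h => h2 (by linear_combination congrArg Prod.snd h)) hw

theorem isLegal_petersen_inner_iff {k : ℕ} (hk : ¬ m ∣ k) (h2k : ¬ m ∣ 2 * k)
    {ω : Fin 2 × Fin m → Bool} {i : Fin m} (hu : ω (0, i) = false) :
    IsLegal (petersen m k) ω (1, i) ↔
      ω (1, i) = true ∧ ω (1, i + k) = true ∧ ω (1, i - k) = true := by
  rw [← Fin.natCast_eq_zero] at hk h2k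
  push_cast at h2k
  exact isLegal_iff_of_closedNbhd_eq_of_eq_false (closedNbhd_petersen_inner k i) (by simp)
    (fun h => hk (by linear_combination -congrArg Prod.snd h))
    (fun h => hk (by linear_combination congrArg Prod.snd h)) (by simp) (by simp)
    (fun h => h2k (by linear_combination congrArg Prod.snd h)) hu

end Petersen

section PetersenTwo

open Fin.CommRing

variable {m : ℕ} [NeZero m]

/-- An outer vertex `u_i` is switched on only by the move at `w_i`, which switches `w_{i-2}`,
`w_i`, `w_{i+2}` off; `u_{i+2}` then stays off, since a move at `w_{i+2}` would need `w_i` on. -/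
def PlayInvariant (ω : Fin 2 × Fin m → Bool) : Prop :=
  ∀ i, ω (0, i) = true →
    ω (1, i - 2) = false ∧ ω (1, i) = false ∧ ω (1, i + 2) = false ∧ ω (0, i + 2) = false

theorem playInvariant_P10 : PlayInvariant (P10 m) := by
  simp [PlayInvariant, P10]

namespace PlayInvariant

variable {ω ω' : Fin 2 × Fin m → Bool}

theorem outer_eq_false (h : PlayInvariant ω) {i : Fin m} (hw : ω (1, i) = true) :
    ω (0, i) = false := by
  cases hu : ω (0, i)
  · rfl
  · simpa [hw] using (h i hu).2.1

theorem not_isLegal_outer (hm : 3 ≤ m) (h : PlayInvariant ω) (i : Fin m) :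
    ¬ IsLegal (petersen m 2) ω (0, i) := by
  intro hlegal
  obtain ⟨-, hnext, hprev⟩ := (isLegal_petersen_outer_iff hm (h i hlegal.1).2.1).1 hlegal
  have hnext_off := (h (i - 1) hprev).2.2.2
  rw [show i - 1 + 2 = i + 1 by ring, hnext] at hnext_off
  exact Bool.noConfusion hnext_off

theorem isLegal_inner_iff (hm : 5 ≤ m) (h : PlayInvariant ω) (i : Fin m) :
    IsLegal (petersen m 2) ω (1, i) ↔
      ω (1, i) = true ∧ ω (1, i + 2) = true ∧ ω (1, i - 2) = true := by
  by_cases hw : ω (1, i) = true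
  · exact isLegal_petersen_inner_iff (Nat.not_dvd_of_pos_of_lt two_pos (by omega))
      (Nat.not_dvd_of_pos_of_lt (by norm_num) (by omega)) (h.outer_eq_false hw)
  · exact iff_of_false (fun hlegal => hw hlegal.1) (fun hon => hw hon.1)

theorem exists_of_step (hm : 5 ≤ m) (h : PlayInvariant ω) (hs : Step (petersen m 2) ω ω') :
    ∃ i, (ω (1, i) = true ∧ ω (1, i + 2) = true ∧ ω (1, i - 2) = true) ∧
      ω' = move (petersen m 2) ω (1, i) := by
  obtain ⟨⟨b, i⟩, hlegal, rfl⟩ := hs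
  fin_cases b
  · exact (h.not_isLegal_outer (by omega) i hlegal).elim
  · exact ⟨i, (h.isLegal_inner_iff hm i).1 hlegal, rfl⟩

theorem inner_eq_true_of_step (hm : 5 ≤ m) (h : PlayInvariant ω)
    (hs : Step (petersen m 2) ω ω') {j : Fin m} (hj : ω' (1, j) = true) : ω (1, j) = true := by
  obtain ⟨i, ⟨hi, hi_add, hi_sub⟩, rfl⟩ := h.exists_of_step hm hs
  rw [move_petersen_inner_apply_inner] at hj
  split_ifs at hj with hflip
  · rcases hflip with rfl | rfl | rfl <;> simp_all
  · exact hj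

theorem step (hm : 5 ≤ m) (h : PlayInvariant ω) (hs : Step (petersen m 2) ω ω') :
    PlayInvariant ω' := by
  have stays_off : ∀ x, ω (1, x) = false → ω' (1, x) = false := fun x hx => by
    cases hx' : ω' (1, x)
    · rfl
    · simpa [hx] using h.inner_eq_true_of_step hm hs hx'
  obtain ⟨i, ⟨hi, hi_add, hi_sub⟩, rfl⟩ := h.exists_of_step hm hs
  intro j hj
  rw [move_petersen_inner_apply_outer] at hj
  by_cases hji : j = i
  · subst hji
    have h2 : (2 : Fin m) ≠ 0 := by
      exact_mod_cast Fin.natCast_ne_zero_of_pos_of_lt two_pos (by omega)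
    have hne : j + 2 ≠ j := fun h => h2 (by linear_combination h)
    simp only [move_petersen_inner_apply_inner, move_petersen_inner_apply_outer, if_neg hne]
    simp [hi, hi_add, hi_sub, h.outer_eq_false hi_add]
  · rw [if_neg hji] at hj
    obtain ⟨hsub, hself, hadd, hu_add⟩ := h j hj
    refine ⟨stays_off _ hsub, stays_off _ hself, stays_off _ hadd, ?_⟩
    rw [move_petersen_inner_apply_outer, if_neg]
    · exact hu_add
    · rintro rfl
      simp [hi] at hadd

theorem reach (hm : 5 ≤ m) (h : PlayInvariant ω) (hr : Reach (petersen m 2) ω ω') :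
    PlayInvariant ω' := by
  induction hr with
  | refl => exact h
  | tail _ hs ih => exact ih.step hm hs

theorem inner_eq_true_of_reach (hm : 5 ≤ m) (h : PlayInvariant ω)
    (hr : Reach (petersen m 2) ω ω') {j : Fin m} (hj : ω' (1, j) = true) : ω (1, j) = true := by
  induction hr with
  | refl => exact hj
  | tail hr hs ih => exact ih ((h.reach hm hr).inner_eq_true_of_step hm hs hj)

end PlayInvariant

end PetersenTwo

end Toggle

/-- in a game of Toggle on `P(m,2)` (`m ≥ 5`) starting from
`P_{1,0}(m,2)`, every vertex that is unplayable at some reachable position is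
terminally unplayable at that position. -/
theorem statement17 (m : ℕ) (hm : 5 ≤ m)
    (ω : Fin 2 × Fin m → Bool)
    (hr : Toggle.Reach (Toggle.petersen m 2) (Toggle.P10 m) ω)
    (v : Fin 2 × Fin m) (hv : ¬ Toggle.IsLegal (Toggle.petersen m 2) ω v) :
    Toggle.TerminallyUnplayable (Toggle.petersen m 2) ω v := by
  have : NeZero m := ⟨by omega⟩
  have hω : Toggle.PlayInvariant ω := Toggle.playInvariant_P10.reach hm hr
  intro ω' hr' hlegal
  have hω' : Toggle.PlayInvariant ω' := hω.reach hm hr'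
  obtain ⟨b, i⟩ := v
  fin_cases b
  · exact hω'.not_isLegal_outer (by omega) i hlegal
  · obtain ⟨h, h_add, h_sub⟩ := (hω'.isLegal_inner_iff hm i).1 hlegal
    exact hv <| (hω.isLegal_inner_iff hm i).2
      ⟨hω.inner_eq_true_of_reach hm hr' h, hω.inner_eq_true_of_reach hm hr' h_add,
        hω.inner_eq_true_of_reach hm hr' h_sub⟩
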